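/- Let z_1,...,z_n be distinct points of CP^1 with Hopf lifts (u_i, v_i) in C^2 \ {0}, and let L_i(u,v) = u_i v - v_i u. Fix 1 <= d <= n-1 and k = n-d. For each d-subset I of {1,...,n} with complement J, set q_I = prod_{j in J} L_j (a binary form of degree k), and p_I = Lambda_{q_I}^{\odot d}, the d-fold symmetric tensor power of the linear functional Lambda_{q_I} = (q_I, -) on P_{1,k}. Then the binom(n,d) elements p_I, as I ranges over d-subsets of {1,...,n}, are linearly independent over C. -/

import Mathlib

open Polynomial Finset

/-- The bilinear pairing on binary forms of degree `k`, where a form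
`q(u,v) = ∑ c_i u^(k-i) v^i` is encoded as the polynomial `∑ c_i X^i` (i.e. `u = 1`,
`X = v`):  `(q, q~) = ∑_{i=0}^k (-1)^i c_i d_{k-i} / binom(k,i)`. -/
noncomputable def bform (k : ℕ) (q r : Polynomial ℂ) : ℂ :=
  ∑ i ∈ Finset.range (k + 1), (-1) ^ i * q.coeff i * r.coeff (k - i) / (k.choose i : ℂ)

/-!
Pairing with a `k`-th power of a linear form evaluates a binary form at the dual point, so
`bform k q_I (L_t ^ k) = ∏_{j ∉ I} (u_j v_t - v_j u_t)`, which is nonzero exactly when `t ∈ I`.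
Evaluate a vanishing combination `∑ g_I p_I` at the sums `∑_{t ∈ S} L_t ^ k` for `S ⊆ I₀` and
take the alternating sum over `S`: by polarization this replaces the `d`-th powers by
`d! ∏_{t ∈ I₀} bform k q_I (L_t ^ k)`, which vanishes for `I ≠ I₀` (some `t ∈ I₀` lies outside
`I`) and not for `I = I₀`. Hence `g_{I₀} = 0`.
-/

section Polarization

variable {R ι : Type*} [CommRing R] [Fintype ι] [DecidableEq ι]

theorem sum_supset_neg_one_pow_card (T : Finset ι) :
    ∑ S : Finset ι, (if T ⊆ S then (-1 : R) ^ #S else 0)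
      = if T = univ then (-1) ^ Fintype.card ι else 0 := by
  have h := Finset.prod_add (fun _ => (-1 : R)) (fun t => if t ∉ T then 1 else 0) univ
  simp only [prod_const, powerset_univ, prod_boole] at h
  have hfac : ∀ t, (-1 : R) + (if t ∉ T then 1 else 0) = if t ∈ T then -1 else 0 := by
    intro t; split_ifs <;> simp_all
  simp only [hfac, Fintype.prod_ite_zero, prod_const, card_univ] at h
  convert h.symm using 2 with S
  · simp only [mem_sdiff, mem_univ, true_and, not_imp_not, mul_ite, mul_one, mul_zero, subset_iff]
  · simp [eq_univ_iff_forall]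

theorem sum_neg_one_pow_card_mul_sum_pow (w : ι → R) :
    ∑ S : Finset ι, (-1) ^ #S * (∑ t ∈ S, w t) ^ Fintype.card ι
      = (-1) ^ Fintype.card ι * (Fintype.card ι).factorial * ∏ t, w t := by
  set n := Fintype.card ι
  have hexpand : ∀ S : Finset ι, (∑ t ∈ S, w t) ^ n
      = ∑ p : Fin n → ι, if univ.image p ⊆ S then ∏ i, w (p i) else 0 := by
    intro S
    rw [← sum_ite_mem_eq, Fintype.sum_pow]
    simp only [Fintype.prod_ite_zero, image_subset_iff, mem_univ, true_implies]
    congr!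
  have hbij : ∀ p : Fin n → ι, univ.image p = univ ↔ p.Bijective := by
    intro p
    rw [Fintype.bijective_iff_surjective_and_card, Fintype.card_fin, and_iff_left rfl,
      eq_univ_iff_forall]
    simp only [mem_image, mem_univ, true_and, Function.Surjective]
  calc ∑ S : Finset ι, (-1) ^ #S * (∑ t ∈ S, w t) ^ n
      = ∑ p : Fin n → ι, (∏ i, w (p i)) *
          ∑ S : Finset ι, if univ.image p ⊆ S then (-1 : R) ^ #S else 0 := by
        simp_rw [hexpand, mul_sum, sum_comm (γ := Finset ι)]
        refine sum_congr rfl fun p _ => sum_congr rfl fun S _ => ?_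
        split_ifs <;> ring
    _ = ∑ p : Fin n → ι, if p.Bijective then (-1) ^ n * ∏ t, w t else 0 := by
        refine sum_congr rfl fun p _ => ?_
        simp only [sum_supset_neg_one_pow_card, hbij]
        split_ifs with hp
        · rw [← Equiv.prod_comp (Equiv.ofBijective p hp) w]; simp [mul_comm, n]
        · simp
    _ = (-1) ^ n * n.factorial * ∏ t, w t := by
        have hcount : #{p : Fin n → ι | p.Bijective} = n.factorial := by
          rw [← Fintype.card_subtype, Fintype.card_congr Equiv.bijectiveEquiv,
            Fintype.card_equiv (Fintype.equivFinOfCardEq rfl).symm, Fintype.card_fin]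
        rw [← sum_filter, sum_const, nsmul_eq_mul, hcount]
        ring

end Polarization

theorem linearIndependent_pow_of_apply_ne_zero_iff {K ι X : Type*} [Field K] [CharZero K]
    [Fintype ι] [DecidableEq ι] [AddCommMonoid X] (d : ℕ) (φ : Finset ι → X → K) (e : ι → X)
    (hφ : ∀ I s, φ I (∑ t ∈ s, e t) = ∑ t ∈ s, φ I (e t))
    (he : ∀ I : Finset ι, #I = d → ∀ t, φ I (e t) ≠ 0 ↔ t ∈ I) :
    LinearIndependent K (fun I : powersetCard d (univ : Finset ι) => fun x => φ I x ^ d) := by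
  rw [Fintype.linearIndependent_iff]
  intro g hg I₀
  have hcard (I : powersetCard d (univ : Finset ι)) : #(I : Finset ι) = d :=
    (mem_powersetCard.mp I.2).2
  have hvanish (s : Finset ι) : ∑ I, g I * (∑ t ∈ s, φ I (e t)) ^ d = 0 := by
    simpa [hφ] using congrFun hg (∑ t ∈ s, e t)
  set T : Finset ι := ↑I₀
  have hT : Fintype.card T = d := by rw [Fintype.card_coe]; exact hcard I₀
  have hpolar : ∑ I, g I * ((-1) ^ d * d.factorial * ∏ t ∈ T, φ I (e t)) = 0 := by
    calc ∑ I, g I * ((-1) ^ d * d.factorial * ∏ t ∈ T, φ I (e t))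
        = ∑ I, g I * ∑ S : Finset T, (-1) ^ #S * (∑ t ∈ S, φ I (e t)) ^ d := by
          refine sum_congr rfl fun I _ => congrArg (g I * ·) ?_
          rw [← prod_coe_sort]
          simpa only [hT] using
            (sum_neg_one_pow_card_mul_sum_pow fun t : T => φ I (e t)).symm
      _ = ∑ S : Finset T, (-1) ^ #S *
            ∑ I, g I * (∑ t ∈ S.map (Function.Embedding.subtype _), φ I (e t)) ^ d := by
          simp only [sum_map, Function.Embedding.coe_subtype, mul_sum]
          rw [sum_comm]
          refine sum_congr rfl fun S _ => sum_congr rfl fun I _ => by ring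
      _ = 0 := by simp only [hvanish, mul_zero, sum_const_zero]
  rw [sum_eq_single I₀ ?_ (by simp)] at hpolar
  · have hprod : ∏ t ∈ T, φ I₀ (e t) ≠ 0 :=
      prod_ne_zero_iff.mpr fun t ht => (he T (hcard I₀) t).mpr ht
    simpa [hprod, Nat.factorial_ne_zero] using hpolar
  · intro I _ hI
    obtain ⟨t, htT, htI⟩ : ∃ t ∈ T, t ∉ (I : Finset ι) := by
      refine not_subset.mp fun hsub => hI (Subtype.ext ?_)
      exact (eq_of_subset_of_card_le hsub (by rw [hcard, hcard])).symm
    rw [prod_eq_zero htT (not_not.mp (mt (he I (hcard I) t).mp htI)), mul_zero, mul_zero]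

theorem Polynomial.eval_homogenize_eq_sum {R : Type*} [CommSemiring R] (p : R[X]) (n : ℕ)
    (x : Fin 2 → R) :
    MvPolynomial.eval x (p.homogenize n)
      = ∑ i ∈ range (n + 1), p.coeff i * x 0 ^ i * x 1 ^ (n - i) := by
  simp only [homogenize, Nat.sum_antidiagonal_eq_sum_range_succ_mk, MvPolynomial.eval_sum]
  refine sum_congr rfl fun i _ => ?_
  rw [MvPolynomial.eval_monomial, Finsupp.update_eq_add_single, Finsupp.prod_add_index',
    Finsupp.prod_single_index, Finsupp.prod_single_index]
  · ring
  all_goals simp [pow_add]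

theorem Polynomial.coeff_C_mul_X_sub_C_pow {R : Type*} [CommRing R] (a b : R) {k i : ℕ}
    (hi : i ≤ k) :
    ((C b * X - C a) ^ k).coeff (k - i) = k.choose i * b ^ (k - i) * (-a) ^ i := by
  have hterm : ∀ m, (C b * X) ^ m * C (-a) ^ (k - m) * (k.choose m : R[X])
      = C (b ^ m * (-a) ^ (k - m) * k.choose m) * X ^ m := by
    intro m
    simp only [mul_pow, ← C_pow, ← C_eq_natCast, C_mul]
    ring
  rw [sub_eq_add_neg, ← C_neg, add_pow, finsetSum_coeff, sum_eq_single (k - i)]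
  · rw [hterm, coeff_C_mul_X_pow, if_pos rfl, Nat.sub_sub_self hi, Nat.choose_symm hi]
    ring
  · intro m _ hm
    rw [hterm, coeff_C_mul_X_pow, if_neg (Ne.symm hm)]
  · simp

theorem bform_sum_right {β : Type*} (k : ℕ) (q : ℂ[X]) (s : Finset β) (r : β → ℂ[X]) :
    bform k q (∑ t ∈ s, r t) = ∑ t ∈ s, bform k q (r t) := by
  simp only [bform, finsetSum_coeff, mul_sum, sum_div]
  exact sum_comm

theorem bform_C_mul_X_sub_C_pow (k : ℕ) (q : ℂ[X]) (a b : ℂ) :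
    bform k q ((C b * X - C a) ^ k) = MvPolynomial.eval ![a, b] (q.homogenize k) := by
  rw [eval_homogenize_eq_sum, bform]
  refine sum_congr rfl fun i hi => ?_
  have hik : i ≤ k := Nat.lt_succ_iff.mp (mem_range.mp hi)
  have hchoose : (k.choose i : ℂ) ≠ 0 := Nat.cast_ne_zero.mpr (Nat.choose_pos hik).ne'
  have hsign : (-1 : ℂ) ^ i * (-a) ^ i = a ^ i := by rw [← mul_pow, neg_one_mul, neg_neg]
  rw [coeff_C_mul_X_sub_C_pow a b hik]
  field_simp
  simp only [Matrix.cons_val_zero, Matrix.cons_val_one]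
  linear_combination (q.coeff i * b ^ (k - i)) * hsign

theorem eval_homogenize_prod_C_mul_X_sub_C {ι R : Type*} [CommRing R] (u v : ι → R)
    (J : Finset ι) (x : Fin 2 → R) :
    MvPolynomial.eval x ((∏ j ∈ J, (C (u j) * X - C (v j))).homogenize #J)
      = ∏ j ∈ J, (u j * x 0 - v j * x 1) := by
  rw [card_eq_sum_ones, homogenize_finsetProd, MvPolynomial.eval_prod]
  · simp
  · intro j _
    rw [sub_eq_add_neg, ← C_neg]
    exact natDegree_linear_le

theorem exists_smul_eq_or_of_mul_sub_mul_eq_zero {K : Type*} [Field K] {a b c d : K}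
    (h : a * d - b * c = 0) : (∃ r : K, (a, b) = r • (c, d)) ∨ ∃ r : K, (c, d) = r • (a, b) := by
  by_cases hcd : (c, d) = 0
  · exact Or.inr ⟨0, by simpa using hcd⟩
  left
  rcases not_and_or.mp (mt Prod.mk_eq_zero.mpr hcd) with hc | hd
  · refine ⟨a / c, Prod.ext ?_ ?_⟩ <;> simp only [Prod.smul_mk, smul_eq_mul] <;> field_simp
    linear_combination -h
  · refine ⟨b / d, Prod.ext ?_ ?_⟩ <;> simp only [Prod.smul_mk, smul_eq_mul] <;> field_simp
    linear_combination h

theorem observer_maps_linearIndependent_general (n d : ℕ)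
    (u v : Fin n → ℂ)
    (hdist : ∀ i j, i ≠ j → ¬ ∃ c : ℂ, ((u j, v j) : ℂ × ℂ) = c • (u i, v i)) :
    LinearIndependent ℂ
      (fun I : Finset.powersetCard d (Finset.univ : Finset (Fin n)) =>
        (fun x : Polynomial ℂ =>
          (bform (n - d)
            (∏ j ∈ ((I : Finset (Fin n)))ᶜ,
              (Polynomial.C (u j) * Polynomial.X - Polynomial.C (v j))) x) ^ d)) := by
  have hdet (j t : Fin n) (hjt : j ≠ t) : u j * v t - v j * u t ≠ 0 := fun h =>
    (exists_smul_eq_or_of_mul_sub_mul_eq_zero h).elim (hdist t j hjt.symm) (hdist j t hjt)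
  refine linearIndependent_pow_of_apply_ne_zero_iff d
    (fun I x => bform (n - d) (∏ j ∈ Iᶜ, (C (u j) * X - C (v j))) x)
    (fun t => (C (u t) * X - C (v t)) ^ (n - d)) (fun I s => bform_sum_right _ _ _ _) ?_
  intro I hI t
  have hIc : #Iᶜ = n - d := by rw [card_compl, Fintype.card_fin, hI]
  rw [← hIc, bform_C_mul_X_sub_C_pow, eval_homogenize_prod_C_mul_X_sub_C, prod_ne_zero_iff]
  simp only [Matrix.cons_val_zero, Matrix.cons_val_one]
  constructor
  · intro h
    by_contra ht
    exact h t (mem_compl.mpr ht) (by ring)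
  · intro ht j hj
    exact hdet j t (by rintro rfl; exact mem_compl.mp hj ht)

/-- observer-based construction, `ℂP¹` case: for distinct points of `ℂP¹`
with nonzero lifts `(uᵢ, vᵢ)` and `Lᵢ = uᵢ v - vᵢ u` (encoded as `uᵢ X - vᵢ`), with
`1 ≤ d ≤ n-1`, `k = n - d`, `q_I = ∏_{j ∈ Iᶜ} L_j` and
`p_I = Λ_{q_I}^{⊙ d} ∈ Sym^d(P_{1,k}^*)` — realized here, via the canonical embedding of
`Sym^d` of the dual into functions, as the degree-`d` polynomial function
`x ↦ ((q_I, x))^d` — the `binom(n,d)` elements `p_I` are linearly independent over `ℂ`. -/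
theorem observer_maps_linearIndependent (n d : ℕ) (hd : 1 ≤ d) (hdn : d ≤ n - 1)
    (u v : Fin n → ℂ) (hnz : ∀ i, ((u i, v i) : ℂ × ℂ) ≠ 0)
    (hdist : ∀ i j, i ≠ j → ¬ ∃ c : ℂ, ((u j, v j) : ℂ × ℂ) = c • (u i, v i)) :
    LinearIndependent ℂ
      (fun I : Finset.powersetCard d (Finset.univ : Finset (Fin n)) =>
        (fun x : Polynomial ℂ =>
          (bform (n - d)
            (∏ j ∈ ((I : Finset (Fin n)))ᶜ,
              (Polynomial.C (u j) * Polynomial.X - Polynomial.C (v j))) x) ^ d)) :=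
  observer_maps_linearIndependent_general n d u v hdist
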